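/- Let k ∈ ℝ and ε, r1 ∈ (0,1) with √ε·r1 ≤ 1. Set r4 = ε·r1² and w4 = log(1/r4), and assume r4 ≤ 1/e and that 1/(8·√r·(log(1/r))⁵) ≥ 100·max{|k|,1} for all r ∈ (0, r1]. Let c1 satisfy (1/32)·w4·ε·r1² ≤ c1 < w4, and let c2 satisfy 0 < c2 ≤ 1 and 2c2² ≤ c1. Then for every r ∈ (0, r4] and every σ ∈ [0,1], writing w = log(1/r), one has (2 / (r²·w^{2+2c2·σ}))·[ c1(c1+2)/(w − c1) + c1 − 2c2² ] ≥ 100·max{|k|,1}. -/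

import Mathlib

/-!
With `w = log (1 / r) ≥ log (1 / r4) ≥ 1`, the bracket is at least `2 c1 / w`, since
`c1 (c1 + 2) / (w - c1) ≥ 2 c1 / w` and `c1 - 2 c2² ≥ 0`; and `w ^ (2 + 2 c2 σ) ≤ w ^ 4`.
So the left side is at least `4 c1 / (r² w⁵)`. As `r ≤ r4 ≤ 32 c1` and `r ≤ √r`, this
dominates `1 / (8 √r w⁵)`, which is at least `100 max |k| 1` because `r ≤ r4 ≤ r1`.
-/

open Real

lemma one_le_log_one_div {x : ℝ} (hx : 0 < x) (hxe : x ≤ 1 / exp 1) : 1 ≤ log (1 / x) := by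
  rw [le_log_iff_exp_le (by positivity)]
  exact (le_one_div hx (exp_pos 1)).1 hxe

lemma two_mul_div_le_mul_add_two_div_sub {c w : ℝ} (hc : 0 ≤ c) (hcw : c < w) :
    2 * c / w ≤ c * (c + 2) / (w - c) := by
  have hw : 0 < w := hc.trans_lt hcw
  rw [div_le_div_iff₀ hw (sub_pos.2 hcw)]
  nlinarith [mul_nonneg (mul_nonneg hc hc) hw.le]

lemma one_div_eight_sqrt_mul_le {r c D : ℝ} (hr : 0 < r) (hr1 : r ≤ 1) (hrc : r ≤ 32 * c)
    (hD : 0 < D) : 1 / (8 * √r * D) ≤ 4 * c / (r ^ 2 * D) := by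
  have hsqrt : r ≤ √r := le_sqrt_of_sq_le (by nlinarith)
  have hsq : r ^ 2 ≤ 32 * c * √r := by
    rw [sq]; exact mul_le_mul hrc hsqrt hr.le (by linarith)
  rw [div_le_div_iff₀ (by positivity) (by positivity)]
  nlinarith [mul_le_mul_of_nonneg_right hsq hD.le]

lemma four_mul_div_le_two_div_rpow_mul {r w c e : ℝ} (hr : 0 < r) (hw : 1 ≤ w) (hc : 0 ≤ c)
    (he : e ≤ 4) : 4 * c / (r ^ 2 * w ^ 5) ≤ 2 / (r ^ 2 * w ^ e) * (2 * c / w) := by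
  have hw0 : 0 < w := one_pos.trans_le hw
  have hwe : w ^ e ≤ w ^ (4 : ℕ) := by
    simpa using rpow_le_rpow_of_exponent_le hw (show e ≤ (4 : ℕ) by exact_mod_cast he)
  have hprod : 2 / (r ^ 2 * w ^ e) * (2 * c / w) = 4 * c / (r ^ 2 * (w ^ e * w)) := by
    field_simp; ring
  rw [hprod, show r ^ 2 * w ^ 5 = r ^ 2 * (w ^ 4 * w) by ring]
  gcongr

theorem stmt_4 (k ε r1 c1 c2 : ℝ)
    (hε : ε ∈ Set.Ioo (0 : ℝ) 1) (hr1 : r1 ∈ Set.Ioo (0 : ℝ) 1)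
    (hr4 : ε * r1 ^ 2 ≤ 1 / Real.exp 1)
    (hsmall : ∀ r ∈ Set.Ioc (0 : ℝ) r1,
      1 / (8 * Real.sqrt r * (Real.log (1 / r)) ^ 5) ≥ 100 * max |k| 1)
    (hc1l : (1 / 32) * Real.log (1 / (ε * r1 ^ 2)) * ε * r1 ^ 2 ≤ c1)
    (hc1u : c1 < Real.log (1 / (ε * r1 ^ 2)))
    (hc21 : c2 ≤ 1) (hc2c1 : 2 * c2 ^ 2 ≤ c1) :
    ∀ r ∈ Set.Ioc (0 : ℝ) (ε * r1 ^ 2), ∀ σ ∈ Set.Icc (0 : ℝ) 1,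
      (2 / (r ^ 2 * (Real.log (1 / r)) ^ (2 + 2 * c2 * σ))) *
          (c1 * (c1 + 2) / (Real.log (1 / r) - c1) + c1 - 2 * c2 ^ 2)
        ≥ 100 * max |k| 1 := by
  rintro r ⟨hr0, hrr4⟩ σ ⟨hσ0, hσ1⟩
  have hr4pos : 0 < ε * r1 ^ 2 := mul_pos hε.1 (pow_pos hr1.1 2)
  have hr4r1 : ε * r1 ^ 2 ≤ r1 := by nlinarith [hε.2, hr1.1, hr1.2]
  have hw4 : 1 ≤ log (1 / (ε * r1 ^ 2)) := one_le_log_one_div hr4pos hr4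
  have hw4w : log (1 / (ε * r1 ^ 2)) ≤ log (1 / r) :=
    log_le_log (by positivity) (one_div_le_one_div_of_le hr0 hrr4)
  have hrc1 : r ≤ 32 * c1 := by nlinarith [mul_le_mul_of_nonneg_right hw4 hr4pos.le]
  have hc1 : 0 ≤ c1 := by linarith
  set w := log (1 / r)
  have hw : 1 ≤ w := hw4.trans hw4w
  calc 100 * max |k| 1 ≤ 1 / (8 * √r * w ^ 5) := hsmall r ⟨hr0, hrr4.trans hr4r1⟩
    _ ≤ 4 * c1 / (r ^ 2 * w ^ 5) :=
        one_div_eight_sqrt_mul_le hr0 (by linarith [hr1.2]) hrc1 (by positivity)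
    _ ≤ 2 / (r ^ 2 * w ^ (2 + 2 * c2 * σ)) * (2 * c1 / w) :=
        four_mul_div_le_two_div_rpow_mul hr0 hw hc1 (by nlinarith)
    _ ≤ _ := by
        have hw0 : 0 < w := one_pos.trans_le hw
        gcongr
        linarith [two_mul_div_le_mul_add_two_div_sub hc1 (hc1u.trans_le hw4w)]
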